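/- arXiv:2306.06389 — 7 statements merged into one kernel-verified Lean document; each statement's English description precedes it below -/
import Mathlib

section
/- The extended-real-valued function F₁ : ℝ → EReal defined by F₁(r) = F_log(r) for r ∈ [−1, 1] and F₁(r) = +∞ for r ∉ [−1, 1] is lower semicontinuous on ℝ, and it is convex in the sense that F₁(t·r + (1−t)·s) ≤ t·F₁(r) + (1−t)·F₁(s) (inequality in the extended reals) for all r, s ∈ ℝ and all t ∈ (0, 1). -/
/-- The logarithmic double-well potential `F_{1,log}` of the paper, with the
convention `Real.log 0 = 0`. -/
noncomputable def Flog (r : ℝ) : ℝ :=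
  (1 + r) * Real.log (1 + r) + (1 - r) * Real.log (1 - r)

/-- The extension of `F_log` by `+∞` outside `[-1, 1]`, with values in the extended reals. -/
noncomputable def Fone (r : ℝ) : EReal :=
  if r ∈ Set.Icc (-1 : ℝ) 1 then ((Flog r : ℝ) : EReal) else ⊤

lemma Flog_continuous : Continuous Flog := by
  have h := Real.continuous_mul_log
  exact (h.comp (continuous_const.add continuous_id)).add
    (h.comp (continuous_const.sub continuous_id))

lemma Fone_ne_bot (r : ℝ) : Fone r ≠ ⊥ := by
  unfold Fone; split <;> simp

lemma top_side {t : ℝ} (ht : 0 < t) {y : EReal} (hy : y ≠ ⊥) :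
    (t : EReal) * ⊤ + y = ⊤ := by
  rw [EReal.coe_mul_top_of_pos ht, EReal.top_add_of_ne_bot hy]

/-- The extended-real-valued function `F₁` (equal to `F_log` on `[-1, 1]` and `+∞` outside)
is lower semicontinuous on `ℝ` and convex in the extended-real sense. -/
theorem Fone_lowerSemicontinuous_and_convex :
    LowerSemicontinuous Fone ∧
    ∀ r s : ℝ, ∀ t ∈ Set.Ioo (0 : ℝ) 1,
      Fone (t * r + (1 - t) * s) ≤ (t : EReal) * Fone r + ((1 - t : ℝ) : EReal) * Fone s := by
  constructor
  · intro x y hy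
    by_cases hx : x ∈ Set.Icc (-1 : ℝ) 1
    · rw [Fone, if_pos hx] at hy
      rcases eq_or_ne y ⊥ with rfl | hyb
      · filter_upwards with z using (Fone_ne_bot z).bot_lt
      · lift y to ℝ using ⟨hy.ne_top, hyb⟩
        have hlt : y < Flog x := EReal.coe_lt_coe_iff.1 hy
        have : ∀ᶠ z in nhds x, y < Flog z :=
          (Flog_continuous.tendsto x).eventually (eventually_gt_nhds hlt)
        filter_upwards [this] with z hz
        unfold Fone
        split
        · exact EReal.coe_lt_coe_iff.2 hz
        · exact hy.trans_le le_top
    · have hopen : IsOpen (Set.Icc (-1 : ℝ) 1)ᶜ := isClosed_Icc.isOpen_compl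
      filter_upwards [hopen.mem_nhds hx] with z hz
      rw [Fone, if_neg hz]
      exact hy.trans_le le_top
  · intro r s t ht
    have ht0 := ht.1
    have ht1 : 0 < 1 - t := by linarith [ht.2]
    by_cases hr : r ∈ Set.Icc (-1 : ℝ) 1
    · by_cases hs : s ∈ Set.Icc (-1 : ℝ) 1
      · have hmem : t * r + (1 - t) * s ∈ Set.Icc (-1 : ℝ) 1 := by
          constructor <;> nlinarith [hr.1, hr.2, hs.1, hs.2]
        rw [Fone, if_pos hmem, Fone, if_pos hr, Fone, if_pos hs,
          ← EReal.coe_mul, ← EReal.coe_mul, ← EReal.coe_add, EReal.coe_le_coe_iff]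
        have hg := Real.convexOn_mul_log
        have h1 := hg.2 (show (1 + r : ℝ) ∈ Set.Ici (0:ℝ) by simp; linarith [hr.1])
          (show (1 + s : ℝ) ∈ Set.Ici (0:ℝ) by simp; linarith [hs.1])
          ht0.le ht1.le (by ring)
        have h2 := hg.2 (show (1 - r : ℝ) ∈ Set.Ici (0:ℝ) by simp [hr.2])
          (show (1 - s : ℝ) ∈ Set.Ici (0:ℝ) by simp [hs.2])
          ht0.le ht1.le (by ring)
        simp only [smul_eq_mul] at h1 h2
        have e1 : (1 : ℝ) + (t * r + (1 - t) * s) = t * (1 + r) + (1 - t) * (1 + s) := by ring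
        have e2 : (1 : ℝ) - (t * r + (1 - t) * s) = t * (1 - r) + (1 - t) * (1 - s) := by ring
        unfold Flog
        rw [e1, e2]
        calc (t * (1 + r) + (1 - t) * (1 + s)) * Real.log (t * (1 + r) + (1 - t) * (1 + s))
              + (t * (1 - r) + (1 - t) * (1 - s)) * Real.log (t * (1 - r) + (1 - t) * (1 - s))
            ≤ (t * ((1 + r) * Real.log (1 + r)) + (1 - t) * ((1 + s) * Real.log (1 + s)))
              + (t * ((1 - r) * Real.log (1 - r)) + (1 - t) * ((1 - s) * Real.log (1 - s))) :=
              add_le_add h1 h2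
          _ = _ := by ring
      · have : ((1 - t : ℝ) : EReal) * Fone s + (t : EReal) * Fone r = ⊤ :=
          by rw [Fone, if_neg hs]; exact top_side ht1 (by
            rw [Fone, if_pos hr, ← EReal.coe_mul]; exact EReal.coe_ne_bot _)
        rw [add_comm] at this
        rw [this]; exact le_top
    · have : (t : EReal) * Fone r + ((1 - t : ℝ) : EReal) * Fone s = ⊤ :=
        by rw [Fone, if_neg hr]; exact top_side ht0 (by
          rw [Fone]; split
          · rw [← EReal.coe_mul]; exact EReal.coe_ne_bot _
          · rw [EReal.coe_mul_top_of_pos ht1]; exact top_ne_bot)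
      rw [this]; exact le_top
end

section
/- For all u, v ∈ L²(μ), the one-sided limit lim_{τ→0⁺} (g(u + τ·v) − g(u))/τ exists and equals g'(u; v) = ∫_{{x : u(x)>0}} v dμ − ∫_{{x : u(x)<0}} v dμ + ∫_{{x : u(x)=0}} |v| dμ. (Explicit directional derivative of the full-sparsity functional, used in the definition (3.24) of the critical cone.) -/
/-!
Pointwise, the difference quotient `(|a + τ b| - |a|) / τ` tends, as `τ → 0⁺`, to the one-sided
derivative of `|·|` at `a` in direction `b`, which is `sign a * b` for `a ≠ 0` and `|b|` for
`a = 0`; moreover it is bounded by `|b|`. Since `L²(μ) ⊆ L¹(μ)` for finite `μ`, dominated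
convergence lets the limit pass under the integral, and splitting the limit integrand along the
sign of `u` gives the three integrals.
-/

open MeasureTheory Filter Topology

noncomputable def absDirDeriv (a b : ℝ) : ℝ := if a = 0 then |b| else SignType.sign a * b

theorem tendsto_abs_add_mul_sub_div (a b : ℝ) :
    Tendsto (fun τ => (|a + τ * b| - |a|) / τ) (𝓝[>] 0) (𝓝 (absDirDeriv a b)) := by
  rcases eq_or_ne a 0 with rfl | ha
  · refine tendsto_const_nhds.congr' ?_
    filter_upwards [self_mem_nhdsWithin] with τ (hτ : 0 < τ)
    rw [absDirDeriv, if_pos rfl, zero_add, abs_zero, sub_zero, abs_mul, abs_of_pos hτ,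
      mul_div_cancel_left₀ _ hτ.ne']
  · have hderiv : HasDerivAt (fun τ => |a + τ * b|) (SignType.sign a * b) 0 := by
      have hline : HasDerivAt (fun τ : ℝ => a + τ * b) b 0 := by
        simpa using ((hasDerivAt_id' (0 : ℝ)).mul_const b).const_add a
      exact (hasDerivAt_abs ha).comp_of_eq 0 hline (by simp)
    simpa [absDirDeriv, ha, div_eq_inv_mul] using hderiv.tendsto_slope_zero_right

theorem abs_abs_add_mul_sub_div_le (a b : ℝ) {τ : ℝ} (hτ : 0 < τ) :
    |(|a + τ * b| - |a|) / τ| ≤ |b| := by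
  rw [abs_div, abs_of_pos hτ, div_le_iff₀ hτ]
  calc |(|a + τ * b| - |a|)| ≤ |a + τ * b - a| := abs_abs_sub_abs_le_abs_sub _ _
    _ = |b| * τ := by rw [add_sub_cancel_left, abs_mul, abs_of_pos hτ, mul_comm]

theorem absDirDeriv_comp_eq_indicator {X : Type*} (f g : X → ℝ) :
    (fun x => absDirDeriv (f x) (g x)) = {x | 0 < f x}.indicator g
      - {x | f x < 0}.indicator g + {x | f x = 0}.indicator (fun x => |g x|) := by
  ext x
  rcases lt_trichotomy (f x) 0 with h | h | h
  · simp [absDirDeriv, h, h.ne, not_lt.2 h.le]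
  · simp [absDirDeriv, h]
  · simp [absDirDeriv, h, h.ne', not_lt.2 h.le]

section

variable {X : Type*} [MeasurableSpace X] {μ : Measure X} {f g : X → ℝ}

theorem integral_absDirDeriv_comp (hf : Measurable f) (hg : Integrable g μ) :
    ∫ x, absDirDeriv (f x) (g x) ∂μ
      = (∫ x in {x | 0 < f x}, g x ∂μ) - (∫ x in {x | f x < 0}, g x ∂μ)
        + ∫ x in {x | f x = 0}, |g x| ∂μ := by
  have hpos : MeasurableSet {x | 0 < f x} := measurableSet_lt measurable_const hf
  have hneg : MeasurableSet {x | f x < 0} := measurableSet_lt hf measurable_const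
  have hzero : MeasurableSet {x | f x = 0} := hf (measurableSet_singleton 0)
  rw [absDirDeriv_comp_eq_indicator, integral_add' ((hg.indicator hpos).sub (hg.indicator hneg))
    (hg.abs.indicator hzero), integral_sub' (hg.indicator hpos) (hg.indicator hneg),
    integral_indicator hpos, integral_indicator hneg, integral_indicator hzero]

theorem tendsto_integral_abs_add_mul_sub_div (hf : Integrable f μ) (hg : Integrable g μ) :
    Tendsto (fun τ => ((∫ x, |f x + τ * g x| ∂μ) - ∫ x, |f x| ∂μ) / τ) (𝓝[>] 0)
      (𝓝 (∫ x, absDirDeriv (f x) (g x) ∂μ)) := by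
  have hquot : Tendsto (fun τ => ∫ x, (|f x + τ * g x| - |f x|) / τ ∂μ) (𝓝[>] 0)
      (𝓝 (∫ x, absDirDeriv (f x) (g x) ∂μ)) := by
    refine tendsto_integral_filter_of_dominated_convergence (fun x => |g x|)
      (.of_forall fun τ => ?_) ?_ hg.abs (.of_forall fun x => tendsto_abs_add_mul_sub_div _ _)
    · exact (((hf.add (hg.const_mul τ)).abs.sub hf.abs).div_const τ).aestronglyMeasurable
    · filter_upwards [self_mem_nhdsWithin] with τ (hτ : 0 < τ)
      exact .of_forall fun x => abs_abs_add_mul_sub_div_le _ _ hτ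
  refine hquot.congr fun τ => ?_
  have hsum : Integrable (fun x => f x + τ * g x) μ := hf.add (hg.const_mul τ)
  rw [integral_div, integral_sub hsum.abs hf.abs]

end

/-- Explicit directional derivative of the full-sparsity functional `g u = ∫ |u| dμ`
on `L²(μ)`: for every `u, v ∈ L²(μ)`, the one-sided difference quotients
`(g(u + τ v) - g(u)) / τ` converge, as `τ → 0⁺`, to
`∫_{u>0} v dμ - ∫_{u<0} v dμ + ∫_{u=0} |v| dμ`. -/
theorem fullSparsity_directional_derivative
    {X : Type*} [MeasurableSpace X] (μ : Measure X) [IsFiniteMeasure μ]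
    (u v : Lp ℝ 2 μ) :
    Filter.Tendsto
      (fun τ : ℝ => ((∫ x, |(u + τ • v) x| ∂μ) - ∫ x, |u x| ∂μ) / τ)
      (nhdsWithin 0 (Set.Ioi 0))
      (nhds ((∫ x in {x | 0 < u x}, v x ∂μ) - (∫ x in {x | u x < 0}, v x ∂μ)
        + ∫ x in {x | u x = 0}, |v x| ∂μ)) := by
  have hu : Integrable u μ := (Lp.memLp u).integrable (by norm_num)
  have hv : Integrable v μ := (Lp.memLp v).integrable (by norm_num)
  rw [← integral_absDirDeriv_comp (Lp.stronglyMeasurable u).measurable hv]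
  refine (tendsto_integral_abs_add_mul_sub_div hu hv).congr fun τ => ?_
  have hcoe : (fun x => |u x + τ * v x|) =ᵐ[μ] fun x => |(u + τ • v) x| := by
    filter_upwards [Lp.coeFn_add u (τ • v), Lp.coeFn_smul τ v] with x hadd hsmul
    rw [hadd, Pi.add_apply, hsmul, Pi.smul_apply, smul_eq_mul]
  rw [integral_congr_ae hcoe]
end

section
/- Let H be a real Hilbert space, U ⊆ H a nonempty convex set, κ > 0, g : H → ℝ a convex continuous function, u* ∈ U, and φ : H → ℝ a continuous linear functional such that φ(u − u*) + κ·(g(u) − g(u*)) ≥ 0 for every u ∈ U. Then there exists λ ∈ H such that g(v) ≥ g(u*) + ⟪λ, v − u*⟫ for every v ∈ H (i.e. λ is a subgradient of g at u*), and φ(u − u*) + κ·⟪λ, u − u*⟫ ≥ 0 for every u ∈ U. (Abstract form of the existence of the sparsity multiplier λ* in the linearized variational inequality (3.22).) -/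
open scoped RealInnerProductSpace

/-- Abstract existence of the sparsity multiplier `λ*` in the linearized variational
inequality (3.22): if `φ (u - u*) + κ (g u - g u*) ≥ 0` on the nonempty convex set `U`
for a convex continuous `g` on a real Hilbert space, then there is a subgradient `λ` of
`g` at `u*` such that `φ (u - u*) + κ ⟪λ, u - u*⟫ ≥ 0` for all `u ∈ U`. -/
theorem exists_sparsity_multiplier
    {H : Type*} [NormedAddCommGroup H] [InnerProductSpace ℝ H] [CompleteSpace H]
    (U : Set H) (hne : U.Nonempty) (hU : Convex ℝ U)
    (κ : ℝ) (hκ : 0 < κ)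
    (g : H → ℝ) (hg : ConvexOn ℝ Set.univ g) (hgc : Continuous g)
    (ustar : H) (hmem : ustar ∈ U) (φ : H →L[ℝ] ℝ)
    (hvi : ∀ u ∈ U, 0 ≤ φ (u - ustar) + κ * (g u - g ustar)) :
    ∃ lam : H, (∀ v : H, g ustar + ⟪lam, v - ustar⟫ ≤ g v) ∧
      ∀ u ∈ U, 0 ≤ φ (u - ustar) + κ * ⟪lam, u - ustar⟫ := by
  classical
  set A : Set (H × ℝ) := {q | g (ustar + q.1) - g ustar < q.2} with hAdef
  set B : Set (H × ℝ) := {q | ustar + q.1 ∈ U ∧ κ * q.2 + φ q.1 ≤ 0} with hBdef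
  have hAopen : IsOpen A := by
    have hcont : Continuous fun q : H × ℝ => g (ustar + q.1) - g ustar :=
      (hgc.comp (continuous_const.add continuous_fst)).sub continuous_const
    exact isOpen_lt hcont continuous_snd
  have hcombo : ∀ (q r : H × ℝ) (a b : ℝ), a + b = 1 →
      ustar + (a • q + b • r).1 = a • (ustar + q.1) + b • (ustar + r.1) := by
    intro q r a b hab
    have hb' : b = 1 - a := by linarith
    subst hb'
    simp only [Prod.fst_add, Prod.smul_fst]
    module
  have hAconv : Convex ℝ A := by
    intro q hq r hr a b ha hb hab
    simp only [hAdef, Set.mem_setOf_eq] at hq hr ⊢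
    rw [hcombo q r a b hab]
    have h2 := hg.2 (Set.mem_univ (ustar + q.1)) (Set.mem_univ (ustar + r.1)) ha hb hab
    simp only [smul_eq_mul] at h2
    have h3 : (a • q + b • r).2 = a * q.2 + b * r.2 := by
      simp [Prod.smul_snd, smul_eq_mul]
    rw [h3]
    rcases eq_or_lt_of_le ha with h | h
    · have hb1 : b = 1 := by linarith
      subst hb1
      rw [← h] at h2 ⊢
      simp only [zero_smul, zero_add, one_smul, zero_mul, one_mul] at h2 ⊢
      linarith
    · have hgu : a * g ustar + b * g ustar = g ustar := by rw [← add_mul, hab, one_mul]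
      nlinarith [mul_lt_mul_of_pos_left hq h, mul_le_mul_of_nonneg_left hr.le hb]
  have hBconv : Convex ℝ B := by
    intro q hq r hr a b ha hb hab
    obtain ⟨hq1, hq2⟩ := hq
    obtain ⟨hr1, hr2⟩ := hr
    refine ⟨?_, ?_⟩
    · rw [hcombo q r a b hab]
      exact hU hq1 hr1 ha hb hab
    · simp only [Prod.fst_add, Prod.snd_add, Prod.smul_fst, Prod.smul_snd, smul_eq_mul,
        map_add, map_smul, smul_eq_mul]
      nlinarith [mul_le_mul_of_nonneg_left hq2 ha, mul_le_mul_of_nonneg_left hr2 hb]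
  have hdisj : Disjoint A B := by
    rw [Set.disjoint_left]
    rintro q hqA ⟨hq1, hq2⟩
    have hviq := hvi (ustar + q.1) hq1
    simp only [add_sub_cancel_left] at hviq
    simp only [hAdef, Set.mem_setOf_eq] at hqA
    nlinarith
  obtain ⟨f, s, hfA, hfB⟩ := geometric_hahn_banach_open hAconv hAopen hBconv hdisj
  have hdec : ∀ q : H × ℝ, f q = f (q.1, (0 : ℝ)) + q.2 * f ((0 : H), (1 : ℝ)) := by
    intro q
    have hq : q = (q.1, (0 : ℝ)) + q.2 • ((0 : H), (1 : ℝ)) := by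
      simp [Prod.ext_iff]
    calc f q = f ((q.1, (0 : ℝ)) + q.2 • ((0 : H), (1 : ℝ))) := by rw [← hq]
    _ = f (q.1, (0 : ℝ)) + q.2 * f ((0 : H), (1 : ℝ)) := by
        rw [map_add, map_smul]; simp [smul_eq_mul]
  set c := f ((0 : H), (1 : ℝ)) with hcdef
  clear_value c
  have hf00 : f ((0 : H), (0 : ℝ)) = 0 := by
    have h0 : ((0 : H), (0 : ℝ)) = (0 : H × ℝ) := rfl
    rw [h0, map_zero]
  have h00B : ((0 : H), (0 : ℝ)) ∈ B := by
    refine ⟨by simpa using hmem, by simp⟩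
  have h01A : ((0 : H), (1 : ℝ)) ∈ A := by
    simp [hAdef]
  have hs_le : s ≤ 0 := by
    have := hfB _ h00B
    rwa [hf00] at this
  have hc_lt : c < s := by
    rw [hcdef]
    exact hfA _ h01A
  have hc0 : c < 0 := lt_of_lt_of_le hc_lt hs_le
  have hcne : c ≠ 0 := ne_of_lt hc0
  have hcpos : 0 < -c := by linarith
  have hs_ge : 0 ≤ s := by
    by_contra hs
    push_neg at hs
    have ht : (0 : ℝ) < s / (2 * c) := div_pos_of_neg_of_neg hs (by linarith)
    have hmemA : ((0 : H), s / (2 * c)) ∈ A := by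
      simp [hAdef, ht]
    have hlt := hfA _ hmemA
    rw [hdec] at hlt
    simp only [hf00, zero_add] at hlt
    have heq : s / (2 * c) * c = s / 2 := by
      field_simp
    rw [heq] at hlt
    linarith
  have hs0 : s = 0 := le_antisymm hs_le hs_ge
  subst hs0
  set p := (InnerProductSpace.toDual ℝ H).symm (f.comp (ContinuousLinearMap.inl ℝ H ℝ)) with hpdef
  have hp : ∀ x : H, ⟪p, x⟫ = f (x, (0 : ℝ)) := by
    intro x
    rw [hpdef, InnerProductSpace.toDual_symm_apply]
    simp
  clear_value p
  refine ⟨(-c)⁻¹ • p, ?_, ?_⟩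
  · intro v
    set x := v - ustar with hx
    have hxv : ustar + x = v := by simp [hx]
    set d := g v - g ustar with hd
    clear_value x d
    have key : f (x, (0 : ℝ)) + d * c ≤ 0 := by
      by_contra hpos
      push_neg at hpos
      have hε : 0 < (f (x, (0 : ℝ)) + d * c) / (-2 * c) := div_pos hpos (by linarith)
      have hmemA : (x, d + (f (x, (0 : ℝ)) + d * c) / (-2 * c)) ∈ A := by
        simp only [hAdef, Set.mem_setOf_eq, hxv]
        linarith
      have hlt := hfA _ hmemA
      rw [hdec (x, d + (f (x, (0 : ℝ)) + d * c) / (-2 * c))] at hlt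
      have htc : (d + (f (x, (0 : ℝ)) + d * c) / (-2 * c)) * c
          = d * c - (f (x, (0 : ℝ)) + d * c) / 2 := by
        field_simp
        ring
      rw [htc] at hlt
      dsimp only at hlt
      linarith
    rw [real_inner_smul_left, hp]
    have h1 : f (x, (0 : ℝ)) / (-c) ≤ d := by
      rw [div_le_iff₀ hcpos]
      nlinarith [key]
    rw [← div_eq_inv_mul]
    linarith
  · intro u hu
    set x := u - ustar with hx
    have hxu : ustar + x = u := by simp [hx]
    clear_value x
    set t := -(φ x) / κ with ht
    clear_value t
    have hκt : κ * t = -(φ x) := by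
      rw [ht]
      field_simp
    have hmemB : (x, t) ∈ B := by
      refine ⟨by rwa [hxu], ?_⟩
      simp only []
      linarith
    have hge : (0 : ℝ) ≤ f (x, (0 : ℝ)) + t * c := by
      have h0 := hfB _ hmemB
      rw [hdec (x, t)] at h0
      dsimp only at h0
      exact h0
    rw [real_inner_smul_left, hp]
    have h2eq : κ * f (x, (0 : ℝ)) - φ x * c = κ * (f (x, (0 : ℝ)) + t * c) := by
      linear_combination (-c) * hκt
    have h2 : 0 ≤ κ * f (x, (0 : ℝ)) - φ x * c := by
      rw [h2eq]
      exact mul_nonneg hκ.le hge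
    have h3 : φ x + κ * ((-c)⁻¹ * f (x, (0 : ℝ))) = (-c)⁻¹ * (κ * f (x, (0 : ℝ)) - φ x * c) := by
      field_simp
      ring
    rw [h3]
    exact mul_nonneg (inv_nonneg.2 hcpos.le) h2
end

section
/- Let (X, μ) be a finite measure space, l ≤ h real numbers, w an integrable real-valued function on X (w ∈ L¹(μ)), and u* a measurable function with l ≤ u*(x) ≤ h for μ-a.e. x. Then ∫ w·(u − u*) dμ ≥ 0 holds for every measurable function u with l ≤ u(x) ≤ h μ-a.e. if and only if for μ-a.e. x one has w(x)·(c − u*(x)) ≥ 0 for every c ∈ [l, h]. (Equivalence of the integral variational inequality and its pointwise form, the standard conclusion underlying the projection and sparsity formulas.) -/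
open MeasureTheory

/-- Equivalence of the integral variational inequality and its pointwise form on a finite
measure space: with `w ∈ L¹(μ)` and `l ≤ u* ≤ h` a.e., one has
`∫ w (u - u*) dμ ≥ 0` for every measurable `u` with `l ≤ u ≤ h` a.e. if and only if
for a.e. `x`, `w x * (c - u* x) ≥ 0` for every `c ∈ [l, h]`. -/
theorem integral_VI_iff_pointwise_VI
    {X : Type*} [MeasurableSpace X] (μ : Measure X) [IsFiniteMeasure μ]
    (l h : ℝ) (hlh : l ≤ h)
    (w : X → ℝ) (hw : Integrable w μ)
    (ustar : X → ℝ) (hmeas : Measurable ustar)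
    (hbd : ∀ᵐ x ∂μ, ustar x ∈ Set.Icc l h) :
    (∀ u : X → ℝ, Measurable u → (∀ᵐ x ∂μ, u x ∈ Set.Icc l h) →
      0 ≤ ∫ x, w x * (u x - ustar x) ∂μ) ↔
    (∀ᵐ x ∂μ, ∀ c ∈ Set.Icc l h, 0 ≤ w x * (c - ustar x)) := by
  have hwae := hw.aemeasurable
  set w' := hwae.mk w with hw'def
  have hw'meas : Measurable w' := hwae.measurable_mk
  have hww' : w =ᵐ[μ] w' := hwae.ae_eq_mk
  have hw' : Integrable w' μ := hw.congr hww'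
  constructor
  · intro H
    have key : ∀ c : ℝ, c ∈ Set.Icc l h → ∀ᵐ x ∂μ, 0 ≤ w x * (c - ustar x) := by
      intro c hc
      set A := {x | w' x * (c - ustar x) < 0} with hA
      have hAmeas : MeasurableSet A :=
        measurableSet_lt (hw'meas.mul (measurable_const.sub hmeas)) measurable_const
      set u : X → ℝ := A.piecewise (fun _ => c) ustar with hu
      have humeas : Measurable u := Measurable.piecewise hAmeas measurable_const hmeas
      have hubd : ∀ᵐ x ∂μ, u x ∈ Set.Icc l h := by
        filter_upwards [hbd] with x hx
        by_cases hxA : x ∈ A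
        · simp [hu, Set.piecewise, hxA, hc]
        · simp [hu, Set.piecewise, hxA, hx]
      have hint := H u humeas hubd
      set f : X → ℝ := A.indicator (fun x => w' x * (c - ustar x)) with hf
      have hfeq : (fun x => w x * (u x - ustar x)) =ᵐ[μ] f := by
        filter_upwards [hww'] with x hx
        by_cases hxA : x ∈ A <;>
          simp [hf, hu, Set.piecewise, Set.indicator, hxA, hx]
      have hfmeas : Measurable f :=
        (hw'meas.mul (measurable_const.sub hmeas)).indicator hAmeas
      have hfint : Integrable f μ := by
        refine ((hw'.const_mul (|c| + |l| + |h|)).mono hfmeas.aestronglyMeasurable ?_)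
        filter_upwards [hbd] with x hx
        have h1 : |ustar x| ≤ |l| + |h| := by
          rcases abs_cases (ustar x) with ⟨he, _⟩ | ⟨he, _⟩ <;>
            rcases abs_cases l with ⟨hl1, _⟩ | ⟨hl1, _⟩ <;>
            rcases abs_cases h with ⟨hh1, _⟩ | ⟨hh1, _⟩ <;>
            nlinarith [hx.1, hx.2]
        have hb : |c - ustar x| ≤ |c| + |l| + |h| := by
          calc |c - ustar x| ≤ |c| + |ustar x| := abs_sub _ _
            _ ≤ |c| + (|l| + |h|) := by linarith
            _ = |c| + |l| + |h| := by ring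
        have hk : (0:ℝ) ≤ |c| + |l| + |h| := by positivity
        by_cases hxA : x ∈ A
        · have hfx : ‖f x‖ = |w' x| * |c - ustar x| := by
            simp [hf, Set.indicator_of_mem hxA, abs_mul]
          rw [hfx, Real.norm_eq_abs, abs_mul, abs_of_nonneg hk, mul_comm (|w' x|)]
          exact mul_le_mul_of_nonneg_right hb (abs_nonneg _)
        · simp only [hf, Set.indicator_of_notMem hxA, norm_zero, Real.norm_eq_abs]
          positivity
      have hintf : 0 ≤ ∫ x, f x ∂μ := by
        rwa [integral_congr_ae hfeq] at hint
      have hfle : ∀ x, f x ≤ 0 := by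
        intro x
        by_cases hxA : x ∈ A
        · simpa [hf, Set.indicator_of_mem hxA] using le_of_lt hxA
        · simp [hf, Set.indicator_of_notMem hxA]
      have hzero : f =ᵐ[μ] 0 := by
        have hneg : (0:X → ℝ) ≤ fun x => -f x := fun x => by simpa using hfle x
        have : ∫ x, -f x ∂μ = 0 := by
          rw [integral_neg]
          have : ∫ x, f x ∂μ ≤ 0 := integral_nonpos hfle
          linarith
        have := (integral_eq_zero_iff_of_nonneg hneg hfint.neg).1 this
        filter_upwards [this] with x hx
        simpa using congrArg Neg.neg hx
      filter_upwards [hzero, hww'] with x hx hwx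
      by_cases hxA : x ∈ A
      · exfalso
        have : f x = w' x * (c - ustar x) := Set.indicator_of_mem hxA _
        rw [hx] at this
        exact absurd this.symm (ne_of_lt hxA)
      · rw [hwx]
        simpa [hA] using not_lt.mp hxA
    filter_upwards [key l ⟨le_refl l, hlh⟩, key h ⟨hlh, le_refl h⟩, hbd] with x h1 h2 hx
    intro c hc
    rcases eq_or_lt_of_le hlh with heq | hlt
    · have hul : ustar x = l := le_antisymm (heq ▸ hx.2) hx.1
      have hcl : c = l := le_antisymm (heq ▸ hc.2) hc.1
      simp [hul, hcl]
    · nlinarith [mul_nonneg (sub_nonneg.2 hc.2) h1, mul_nonneg (sub_nonneg.2 hc.1) h2]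
  · intro H u humeas hubd
    apply integral_nonneg_of_ae
    filter_upwards [H, hubd] with x hx hxu
    exact hx _ hxu
end

section
/- Let b > 0, κ > 0 and l < 0 < h be real numbers. Suppose u* ∈ U_ad, d ∈ L²(μ), λ ∈ L²(μ) satisfies the sign conditions for u*, and the variational inequality ∫ (d + κ·λ + b·u*)·(u − u*) dμ ≥ 0 holds for every u ∈ U_ad. Then for μ-a.e. x: u*(x) = 0 if and only if |d(x)| ≤ κ. (Abstract form of the full-sparsity characterization (3.28) of Theorem 3.4, where d plays the role of −𝕙·p*.) -/
open MeasureTheory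

/-- A variational inequality over the pointwise constraint set `{u | u ∈ K a.e.}` localizes:
testing with `u = c` on a measurable set `s` and `u = v` off `s` shows that the integrand
`g (c - v)` has nonnegative integral over every `s`. -/
theorem ae_nonneg_mul_sub_of_forall_integral_mul_sub_nonneg {X : Type*} [MeasurableSpace X]
    {μ : Measure X} [IsFiniteMeasure μ] {K : Set ℝ} {g : X → ℝ} (hg : MemLp g 2 μ)
    {v : Lp ℝ 2 μ} (hv : ∀ᵐ x ∂μ, v x ∈ K)
    (hvi : ∀ u : Lp ℝ 2 μ, (∀ᵐ x ∂μ, u x ∈ K) → 0 ≤ ∫ x, g x * (u x - v x) ∂μ)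
    {c : ℝ} (hc : c ∈ K) :
    ∀ᵐ x ∂μ, 0 ≤ g x * (c - v x) := by
  classical
  refine ae_nonneg_of_forall_setIntegral_nonneg
    (hg.integrable_mul ((memLp_const c).sub (Lp.memLp v))) fun s hs _ => ?_
  have hmem : MemLp (s.piecewise (fun _ => c) v) 2 μ :=
    (memLp_const c).restrict s |>.piecewise hs ((Lp.memLp v).restrict sᶜ)
  have hu := hmem.coeFn_toLp
  have hK : ∀ᵐ x ∂μ, hmem.toLp _ x ∈ K := by
    filter_upwards [hu, hv] with x hx hvx
    rw [hx]
    by_cases hxs : x ∈ s <;> simp [hxs, hc, hvx]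
  have hint : (fun x => g x * (hmem.toLp _ x - v x)) =ᵐ[μ]
      s.indicator (fun x => g x * (c - v x)) := by
    filter_upwards [hu] with x hx
    rw [hx]
    by_cases hxs : x ∈ s <;> simp [hxs]
  simpa only [integral_congr_ae hint, integral_indicator hs] using hvi _ hK

/-- Pointwise optimality conditions for `min (b/2) u² + κ |u| + d u` over `[l, h]`, where `λ` is a
subgradient of `|·|` at `u` and `g = d + κ λ + b u` is the derivative. -/
theorem eq_zero_iff_abs_le_of_nonneg_mul_sub {b κ l h u d lam : ℝ} (hb : 0 < b) (hκ : 0 ≤ κ)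
    (hl : l < 0) (hh : 0 < h)
    (hsign : (0 < u → lam = 1) ∧ (u < 0 → lam = -1) ∧ (u = 0 → lam ∈ Set.Icc (-1 : ℝ) 1))
    (hlow : 0 ≤ (d + κ * lam + b * u) * (l - u)) (hhigh : 0 ≤ (d + κ * lam + b * u) * (h - u)) :
    u = 0 ↔ |d| ≤ κ := by
  obtain ⟨hpos, hneg, hzero⟩ := hsign
  have below_h (hu : u < h) : 0 ≤ d + κ * lam + b * u :=
    nonneg_of_mul_nonneg_left hhigh (sub_pos.2 hu)
  have above_l (hu : l < u) : d + κ * lam + b * u ≤ 0 := by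
    have := nonneg_of_mul_nonneg_left (by linarith : 0 ≤ -(d + κ * lam + b * u) * (u - l))
      (sub_pos.2 hu)
    linarith
  constructor
  · rintro rfl
    obtain ⟨hlam₁, hlam₂⟩ := hzero rfl
    have hd : d = -(κ * lam) := by linarith [below_h hh, above_l hl]
    rw [hd, abs_le]
    constructor <;> nlinarith
  · intro hd
    rw [abs_le] at hd
    by_contra hu
    rcases lt_or_gt_of_ne hu with hu | hu
    · have := below_h (hu.trans hh)
      rw [hneg hu] at this
      nlinarith
    · have := above_l (hl.trans hu)
      rw [hpos hu] at this
      nlinarith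

/-- Abstract full-sparsity characterization ((3.28) of Theorem 3.4): if `b, κ > 0`,
`l < 0 < h`, `u* ∈ U_ad`, `λ` satisfies the sign conditions for `u*`, and the variational
inequality `∫ (d + κ λ + b u*) (u - u*) dμ ≥ 0` holds for all `u ∈ U_ad`, then a.e.
`u* x = 0 ↔ |d x| ≤ κ`. -/
theorem fullSparsity_characterization
    {X : Type*} [MeasurableSpace X] (μ : Measure X) [IsFiniteMeasure μ]
    (b κ l h : ℝ) (hb : 0 < b) (hκ : 0 < κ) (hl : l < 0) (hh : 0 < h)
    (ustar d lam : Lp ℝ 2 μ)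
    (hustar : ∀ᵐ x ∂μ, ustar x ∈ Set.Icc l h)
    (hsign : ∀ᵐ x ∂μ, (0 < ustar x → lam x = 1) ∧ (ustar x < 0 → lam x = -1) ∧
      (ustar x = 0 → lam x ∈ Set.Icc (-1 : ℝ) 1))
    (hvi : ∀ u : Lp ℝ 2 μ, (∀ᵐ x ∂μ, u x ∈ Set.Icc l h) →
      0 ≤ ∫ x, (d x + κ * lam x + b * ustar x) * (u x - ustar x) ∂μ) :
    ∀ᵐ x ∂μ, (ustar x = 0 ↔ |d x| ≤ κ) := by
  have hg : MemLp (fun x => d x + κ * lam x + b * ustar x) 2 μ :=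
    ((Lp.memLp d).add ((Lp.memLp lam).const_mul κ)).add ((Lp.memLp ustar).const_mul b)
  have hlh : l ≤ h := hl.le.trans hh.le
  have hlow := ae_nonneg_mul_sub_of_forall_integral_mul_sub_nonneg hg hustar hvi
    (Set.left_mem_Icc.2 hlh)
  have hhigh := ae_nonneg_mul_sub_of_forall_integral_mul_sub_nonneg hg hustar hvi
    (Set.right_mem_Icc.2 hlh)
  filter_upwards [hlow, hhigh, hsign] with x hlow hhigh hsign
  exact eq_zero_iff_abs_le_of_nonneg_mul_sub hb hκ.le hl hh hsign hlow hhigh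
end

section
/- Let b > 0, κ > 0 and l < 0 < h be real numbers and let d ∈ L²(μ). The following are equivalent: (a) there exists λ ∈ L²(μ) with −1 ≤ λ(x) ≤ 1 for μ-a.e. x such that ∫ (d + κ·λ)·u dμ ≥ 0 for every u ∈ U_ad (i.e. the zero control u* = 0 satisfies the first-order variational inequality with multiplier λ); (b) |d(x)| ≤ κ for μ-a.e. x. Moreover, if (a) holds, then necessarily d + κ·λ = 0 μ-a.e. (Content of Remark 3.5: when the zero control satisfies the first-order conditions, the variational inequality forces d + κλ = 0 a.e.) -/
/-!
Write `g = d + κ λ`. Testing the variational inequality with the admissible control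
`u = -c · sign g`, where `c = min h (-l) > 0`, gives `0 ≤ ∫ g u = -c ∫ |g|`, so `g = 0` a.e.
Hence `d = -κ λ` and `|d| ≤ κ` a.e.; conversely, if `|d| ≤ κ` a.e., then `λ = -d / κ` is a
multiplier for which the integrand vanishes identically.
-/

open MeasureTheory

namespace Real

theorem measurable_sign : Measurable Real.sign :=
  measurable_const.ite (measurableSet_lt measurable_id measurable_const) <|
    measurable_const.ite (measurableSet_lt measurable_const measurable_id) measurable_const

theorem self_mul_sign (x : ℝ) : x * Real.sign x = |x| := by
  rcases lt_trichotomy x 0 with hx | rfl | hx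
  · rw [sign_of_neg hx, abs_of_neg hx, mul_neg_one]
  · simp
  · rw [sign_of_pos hx, abs_of_pos hx, mul_one]

end Real

section

variable {X : Type*} [MeasurableSpace X] {μ : Measure X}

theorem memLp_const_mul_sign_comp [IsFiniteMeasure μ] (c : ℝ) {g : X → ℝ}
    (hg : AEStronglyMeasurable g μ) (p : ENNReal) :
    MemLp (fun x => c * Real.sign (g x)) p μ := by
  refine MemLp.of_bound
    ((Real.measurable_sign.comp_aemeasurable hg.aemeasurable).const_mul c).aestronglyMeasurable
    |c| (Filter.Eventually.of_forall fun x => ?_)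
  rw [Real.norm_eq_abs, abs_mul]
  rcases Real.sign_apply_eq (g x) with hs | hs | hs <;> simp [hs]

theorem ae_eq_zero_of_forall_integral_mul_nonneg [IsFiniteMeasure μ] {p : ENNReal} {l h : ℝ}
    (hl : l < 0) (hh : 0 < h) {g : X → ℝ} (hg : Integrable g μ)
    (H : ∀ u : Lp ℝ p μ, (∀ᵐ x ∂μ, u x ∈ Set.Icc l h) → 0 ≤ ∫ x, g x * u x ∂μ) :
    g =ᵐ[μ] 0 := by
  set c := min h (-l)
  have hc : 0 < c := lt_min hh (neg_pos.mpr hl)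
  have hmem := memLp_const_mul_sign_comp (-c) hg.aestronglyMeasurable p
  have hu := hmem.coeFn_toLp
  have hu_adm : ∀ᵐ x ∂μ, hmem.toLp _ x ∈ Set.Icc l h := by
    filter_upwards [hu] with x hx
    have : c ≤ h := min_le_left _ _
    have : c ≤ -l := min_le_right _ _
    rw [hx, Set.mem_Icc]
    rcases Real.sign_apply_eq (g x) with hs | hs | hs <;> rw [hs] <;> constructor <;> linarith
  have htest : ∫ x, g x * hmem.toLp _ x ∂μ = -c * ∫ x, |g x| ∂μ := by
    rw [← integral_const_mul]
    refine integral_congr_ae ?_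
    filter_upwards [hu] with x hx
    rw [hx, ← Real.self_mul_sign]
    ring
  have habs : ∫ x, |g x| ∂μ = 0 := by
    have := H _ hu_adm
    rw [htest] at this
    exact le_antisymm (nonpos_of_mul_nonneg_right this (neg_neg_of_pos hc))
      (integral_nonneg fun x => abs_nonneg _)
  filter_upwards [(integral_eq_zero_iff_of_nonneg (fun x => abs_nonneg (g x)) hg.abs).mp habs]
    with x hx
  exact abs_eq_zero.mp hx

end

theorem zero_control_first_order_iff_general
    {X : Type*} [MeasurableSpace X] (μ : Measure X) [IsFiniteMeasure μ]
    (κ l h : ℝ) (hκ : 0 < κ) (hl : l < 0) (hh : 0 < h)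
    (d : Lp ℝ 2 μ) :
    ((∃ lam : Lp ℝ 2 μ, (∀ᵐ x ∂μ, lam x ∈ Set.Icc (-1 : ℝ) 1) ∧
        ∀ u : Lp ℝ 2 μ, (∀ᵐ x ∂μ, u x ∈ Set.Icc l h) →
          0 ≤ ∫ x, (d x + κ * lam x) * u x ∂μ) ↔
      (∀ᵐ x ∂μ, |d x| ≤ κ)) ∧
    (∀ lam : Lp ℝ 2 μ, (∀ᵐ x ∂μ, lam x ∈ Set.Icc (-1 : ℝ) 1) →
      (∀ u : Lp ℝ 2 μ, (∀ᵐ x ∂μ, u x ∈ Set.Icc l h) →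
        0 ≤ ∫ x, (d x + κ * lam x) * u x ∂μ) →
      ∀ᵐ x ∂μ, d x + κ * lam x = 0) := by
  have integrable (f : Lp ℝ 2 μ) : Integrable f μ := (Lp.memLp f).integrable one_le_two
  have vanishes (lam : Lp ℝ 2 μ) (H : ∀ u : Lp ℝ 2 μ, (∀ᵐ x ∂μ, u x ∈ Set.Icc l h) →
      0 ≤ ∫ x, (d x + κ * lam x) * u x ∂μ) : ∀ᵐ x ∂μ, d x + κ * lam x = 0 :=
    ae_eq_zero_of_forall_integral_mul_nonneg hl hh
      ((integrable d).add ((integrable lam).const_mul κ)) H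
  refine ⟨⟨fun ⟨lam, hlam, H⟩ => ?_, fun hd => ?_⟩, fun lam _ H => vanishes lam H⟩
  · filter_upwards [vanishes lam H, hlam] with x hx hlamx
    rw [eq_neg_of_add_eq_zero_left hx, abs_neg, abs_mul, abs_of_pos hκ]
    exact mul_le_of_le_one_right hκ.le (abs_le.mpr hlamx)
  · have hlam := Lp.coeFn_smul (-κ⁻¹) d
    refine ⟨(-κ⁻¹) • d, ?_, fun u _ => ?_⟩
    · filter_upwards [hlam, hd] with x hx hdx
      rw [hx, Pi.smul_apply, smul_eq_mul, Set.mem_Icc, ← abs_le, abs_mul, abs_neg,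
        abs_of_pos (inv_pos.mpr hκ)]
      exact inv_mul_le_one_of_le₀ hdx hκ.le
    · refine (integral_eq_zero_of_ae ?_).ge
      filter_upwards [hlam] with x hx
      rw [hx, Pi.smul_apply, smul_eq_mul, ← mul_assoc, mul_neg, mul_inv_cancel₀ hκ.ne']
      simp

/-- Content of Remark 3.5: with `b, κ > 0` and `l < 0 < h`, the zero control satisfies the
first-order variational inequality with some multiplier `λ` taking values in `[-1, 1]` a.e.
if and only if `|d| ≤ κ` a.e.; moreover, any such multiplier necessarily satisfies
`d + κ λ = 0` a.e. -/
theorem zero_control_first_order_iff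
    {X : Type*} [MeasurableSpace X] (μ : Measure X) [IsFiniteMeasure μ]
    (b κ l h : ℝ) (hb : 0 < b) (hκ : 0 < κ) (hl : l < 0) (hh : 0 < h)
    (d : Lp ℝ 2 μ) :
    ((∃ lam : Lp ℝ 2 μ, (∀ᵐ x ∂μ, lam x ∈ Set.Icc (-1 : ℝ) 1) ∧
        ∀ u : Lp ℝ 2 μ, (∀ᵐ x ∂μ, u x ∈ Set.Icc l h) →
          0 ≤ ∫ x, (d x + κ * lam x) * u x ∂μ) ↔
      (∀ᵐ x ∂μ, |d x| ≤ κ)) ∧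
    (∀ lam : Lp ℝ 2 μ, (∀ᵐ x ∂μ, lam x ∈ Set.Icc (-1 : ℝ) 1) →
      (∀ u : Lp ℝ 2 μ, (∀ᵐ x ∂μ, u x ∈ Set.Icc l h) →
        0 ≤ ∫ x, (d x + κ * lam x) * u x ∂μ) →
      ∀ᵐ x ∂μ, d x + κ * lam x = 0) :=
  zero_control_first_order_iff_general μ κ l h hκ hl hh d
end

section
/- Let H be a real Hilbert space, b > 0, and let C ⊆ H be a cone (t·v ∈ C whenever v ∈ C and t ≥ 0) that is weakly sequentially closed (if v_k ∈ C for all k and v_k converges weakly to v, then v ∈ C). Let B : H → ℝ satisfy B(t·v) = t²·B(v) for all t ≥ 0 and v ∈ H, and assume B is weakly sequentially continuous (B(v_k) → B(v) whenever v_k converges weakly to v). Define Q : H → ℝ by Q(v) = b·‖v‖² + B(v). Then Q(v) > 0 for every v ∈ C with v ≠ 0 if and only if there exists δ > 0 such that Q(v) ≥ δ·‖v‖² for every v ∈ C. (Equivalence of the coercivity condition (3.37) with its quantitative δ-form, for quadratic forms of the structure possessed by the second derivative of the reduced cost functional.) -/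
open scoped RealInnerProductSpace
open Filter Topology

/-!
If `δ` could not be found, there would be unit vectors `u k ∈ C` with `b + B (u k) → 0`.
A weakly convergent subsequence has a limit `u₀ ∈ C` with `‖u₀‖ ≤ 1` and `B u₀ ≤ -b`, so `u₀ ≠ 0`
and `b ‖u₀‖² + B u₀ ≤ b + B u₀ ≤ 0`, contradicting coercivity. Homogeneity of degree two then
transfers the bound from unit vectors to the whole cone.
-/

section

variable {H : Type*} [NormedAddCommGroup H] [InnerProductSpace ℝ H]

def TendstoWeakly (u : ℕ → H) (u₀ : H) : Prop :=
  ∀ w : H, Tendsto (fun k => ⟪u k, w⟫) atTop (𝓝 ⟪u₀, w⟫)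

theorem TendstoWeakly.norm_le {u : ℕ → H} {u₀ : H} {R : ℝ} (h : TendstoWeakly u u₀)
    (hu : ∀ k, ‖u k‖ ≤ R) : ‖u₀‖ ≤ R := by
  have hR : 0 ≤ R := (norm_nonneg _).trans (hu 0)
  have hsq : ‖u₀‖ ^ 2 ≤ R * ‖u₀‖ := by
    rw [← real_inner_self_eq_norm_sq]
    refine le_of_tendsto' (h u₀) fun k => (real_inner_le_norm _ _).trans ?_
    exact mul_le_mul_of_nonneg_right (hu k) (norm_nonneg _)
  nlinarith [norm_nonneg u₀]

theorem exists_subseq_tendstoWeakly_of_separableSpace [CompleteSpace H]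
    [TopologicalSpace.SeparableSpace H] {u : ℕ → H} {R : ℝ} (hu : ∀ k, ‖u k‖ ≤ R) :
    ∃ (u₀ : H) (φ : ℕ → ℕ), StrictMono φ ∧ TendstoWeakly (u ∘ φ) u₀ := by
  let x : ℕ → WeakDual ℝ H := fun k => InnerProductSpace.toDual ℝ H (u k)
  have hx : ∀ k, x k ∈ WeakDual.toStrongDual ⁻¹' Metric.closedBall 0 R := fun k => by
    rw [Set.mem_preimage, mem_closedBall_zero_iff]
    exact ((InnerProductSpace.toDual ℝ H).norm_map (u k)).trans_le (hu k)
  obtain ⟨a, -, φ, hφ, ha⟩ := WeakDual.isSeqCompact_closedBall ℝ H 0 R hx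
  refine ⟨(InnerProductSpace.toDual ℝ H).symm (WeakDual.toStrongDual a), φ, hφ, fun w => ?_⟩
  rw [InnerProductSpace.toDual_symm_apply]
  exact ((WeakDual.eval_continuous w).tendsto a).comp ha

theorem exists_subseq_tendstoWeakly [CompleteSpace H] {u : ℕ → H} {R : ℝ}
    (hu : ∀ k, ‖u k‖ ≤ R) :
    ∃ (u₀ : H) (φ : ℕ → ℕ), StrictMono φ ∧ TendstoWeakly (u ∘ φ) u₀ := by
  -- The closed span of the sequence is separable, and inner products of its elements with `w`
  -- only see the projection of `w` onto it.
  set K : Submodule ℝ H := (Submodule.span ℝ (Set.range u)).topologicalClosure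
  have : CompleteSpace K := (Submodule.isClosed_topologicalClosure _).completeSpace_coe
  have : TopologicalSpace.SeparableSpace K :=
    (Set.countable_range u).isSeparable.span.closure.separableSpace
  have huK : ∀ k, u k ∈ K :=
    fun k => Submodule.le_topologicalClosure _ (Submodule.subset_span ⟨k, rfl⟩)
  obtain ⟨u₀, φ, hφ, hlim⟩ := exists_subseq_tendstoWeakly_of_separableSpace
    (u := fun k => (⟨u k, huK k⟩ : K)) hu
  refine ⟨u₀, φ, hφ, fun w => ?_⟩
  simpa using hlim (K.orthogonalProjectionOnto w)

theorem exists_pos_forall_norm_eq_one_le_add [CompleteSpace H] {b : ℝ} (hb : 0 < b) {C : Set H}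
    (hclosed : ∀ (v : ℕ → H) (v₀ : H), (∀ k, v k ∈ C) → TendstoWeakly v v₀ → v₀ ∈ C)
    {B : H → ℝ} (hB0 : B 0 = 0)
    (hwc : ∀ (v : ℕ → H) (v₀ : H), TendstoWeakly v v₀ → Tendsto (B ∘ v) atTop (𝓝 (B v₀)))
    (hpos : ∀ v ∈ C, v ≠ 0 → 0 < b * ‖v‖ ^ 2 + B v) :
    ∃ δ > 0, ∀ u ∈ C, ‖u‖ = 1 → δ ≤ b + B u := by
  by_contra! hsmall
  choose u huC hunorm hu using fun k : ℕ => hsmall (1 / ((k : ℝ) + 1)) Nat.one_div_pos_of_nat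
  obtain ⟨u₀, φ, hφ, hlim⟩ := exists_subseq_tendstoWeakly (fun k => (hunorm k).le)
  have hu₀C : u₀ ∈ C := hclosed _ u₀ (fun k => huC (φ k)) hlim
  have hle : b + B u₀ ≤ 0 :=
    le_of_tendsto_of_tendsto' ((hwc _ _ hlim).const_add b)
      (tendsto_one_div_add_atTop_nhds_zero_nat.comp hφ.tendsto_atTop) fun k => (hu (φ k)).le
  have hu₀ : u₀ ≠ 0 := by
    rintro rfl
    linarith
  have hnorm : ‖u₀‖ ^ 2 ≤ 1 := pow_le_one₀ (norm_nonneg _) (hlim.norm_le fun k => (hunorm _).le)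
  nlinarith [hpos u₀ hu₀C hu₀]

theorem mul_norm_sq_le_of_forall_norm_eq_one {b δ : ℝ} {C : Set H}
    (hcone : ∀ v ∈ C, ∀ t : ℝ, 0 ≤ t → t • v ∈ C)
    {B : H → ℝ} (hquad : ∀ t : ℝ, 0 ≤ t → ∀ v : H, B (t • v) = t ^ 2 * B v)
    (hunit : ∀ u ∈ C, ‖u‖ = 1 → δ ≤ b + B u) :
    ∀ v ∈ C, δ * ‖v‖ ^ 2 ≤ b * ‖v‖ ^ 2 + B v := by
  intro v hv
  rcases eq_or_ne v 0 with rfl | hv0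
  · simpa using (hquad 0 le_rfl 0).ge
  have hnorm : 0 < ‖v‖ := norm_pos_iff.mpr hv0
  set u := ‖v‖⁻¹ • v
  have hvu : ‖v‖ • u = v := by simp [u, smul_smul, hnorm.ne']
  have hu : ‖u‖ = 1 := by simp [u, norm_smul, hnorm.ne']
  have hBv : B v = ‖v‖ ^ 2 * B u := by rw [← hquad _ hnorm.le, hvu]
  calc δ * ‖v‖ ^ 2 ≤ (b + B u) * ‖v‖ ^ 2 :=
        mul_le_mul_of_nonneg_right (hunit u (hcone v hv _ (by positivity)) hu) (by positivity)
    _ = b * ‖v‖ ^ 2 + B v := by rw [hBv]; ring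

end

/-- Equivalence of the coercivity condition (3.37) with its quantitative `δ`-form:
for `Q v = b ‖v‖² + B v` with `b > 0`, `B` positively homogeneous of degree two and weakly
sequentially continuous, and `C` a weakly sequentially closed cone in a real Hilbert space,
`Q > 0` on `C \ {0}` if and only if `Q v ≥ δ ‖v‖²` on `C` for some `δ > 0`. -/
theorem coercivity_iff_quantitative
    {H : Type*} [NormedAddCommGroup H] [InnerProductSpace ℝ H] [CompleteSpace H]
    (b : ℝ) (hb : 0 < b) (C : Set H)
    (hcone : ∀ v ∈ C, ∀ t : ℝ, 0 ≤ t → t • v ∈ C)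
    (hclosed : ∀ (v : ℕ → H) (v₀ : H), (∀ k, v k ∈ C) →
      (∀ w : H, Filter.Tendsto (fun k => ⟪v k, w⟫) Filter.atTop (nhds ⟪v₀, w⟫)) →
      v₀ ∈ C)
    (B : H → ℝ)
    (hquad : ∀ t : ℝ, 0 ≤ t → ∀ v : H, B (t • v) = t ^ 2 * B v)
    (hwc : ∀ (v : ℕ → H) (v₀ : H),
      (∀ w : H, Filter.Tendsto (fun k => ⟪v k, w⟫) Filter.atTop (nhds ⟪v₀, w⟫)) →
      Filter.Tendsto (fun k => B (v k)) Filter.atTop (nhds (B v₀))) :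
    (∀ v ∈ C, v ≠ 0 → 0 < b * ‖v‖ ^ 2 + B v) ↔
    ∃ δ > 0, ∀ v ∈ C, δ * ‖v‖ ^ 2 ≤ b * ‖v‖ ^ 2 + B v := by
  constructor
  · intro hpos
    obtain ⟨δ, hδ, hunit⟩ := exists_pos_forall_norm_eq_one_le_add hb hclosed
      (by simpa using hquad 0 le_rfl 0) hwc hpos
    exact ⟨δ, hδ, mul_norm_sq_le_of_forall_norm_eq_one hcone hquad hunit⟩
  · rintro ⟨δ, hδ, hquant⟩ v hv hv0
    exact (mul_pos hδ (by positivity)).trans_le (hquant v hv)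
end
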